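/- arXiv:2304.01605 — 3 statements merged into one kernel-verified Lean document; each statement's English description precedes it below -/
import Mathlib

section
/- For every positive integer N, ∫_0^N (s^{N-1}/(N-1)!) e^{-s} ds ≥ 1/2, i.e., the lower incomplete gamma function satisfies γ(N, N)/Γ(N) ≥ 1/2. -/
open Finset

private lemma hderivG (n : ℕ) (s : ℝ) :
    HasDerivAt (fun t : ℝ => ∑ k ∈ range (n+1), t ^ k / (Nat.factorial k : ℝ))
      (∑ k ∈ range n, s ^ k / (Nat.factorial k : ℝ)) s := by
  induction n with
  | zero =>
    simp only [range_one, sum_singleton, pow_zero, Nat.factorial_zero, range_zero, sum_empty]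
    simpa using (hasDerivAt_const s (1:ℝ))
  | succ n ih =>
    have h1 : HasDerivAt (fun t : ℝ => t ^ (n+1) / (Nat.factorial (n+1) : ℝ))
        (s ^ n / (Nat.factorial n : ℝ)) s := by
      have := (hasDerivAt_pow (n+1) s).div_const (Nat.factorial (n+1) : ℝ)
      refine this.congr_deriv ?_
      push_cast [Nat.factorial_succ]
      field_simp
    have := ih.add h1
    have heq : (fun t : ℝ => ∑ k ∈ range (n+1+1), t ^ k / (Nat.factorial k : ℝ))
        = fun t : ℝ => (∑ k ∈ range (n+1), t ^ k / (Nat.factorial k : ℝ))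
            + t ^ (n+1) / (Nat.factorial (n+1) : ℝ) := by
      funext t; rw [sum_range_succ]
    rw [heq, sum_range_succ]
    exact this

private lemma integral_eq (n : ℕ) (x : ℝ) :
    ∫ s in (0:ℝ)..x, s ^ n / (Nat.factorial n : ℝ) * Real.exp (-s)
      = 1 - Real.exp (-x) * ∑ k ∈ range (n+1), x ^ k / (Nat.factorial k : ℝ) := by
  set F : ℝ → ℝ := fun t => -(Real.exp (-t) * ∑ k ∈ range (n+1), t ^ k / (Nat.factorial k : ℝ))
  have hF : ∀ s : ℝ, HasDerivAt F (s ^ n / (Nat.factorial n : ℝ) * Real.exp (-s)) s := by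
    intro s
    have he : HasDerivAt (fun t : ℝ => Real.exp (-t)) (-Real.exp (-s)) s := by
      simpa using (hasDerivAt_neg s).exp
    have := ((he.mul (hderivG n s)).neg)
    refine this.congr_deriv ?_
    rw [sum_range_succ]
    ring
  have hint : IntervalIntegrable
      (fun s : ℝ => s ^ n / (Nat.factorial n : ℝ) * Real.exp (-s)) MeasureTheory.volume 0 x := by
    apply Continuous.intervalIntegrable
    continuity
  have := intervalIntegral.integral_eq_sub_of_hasDerivAt (fun s _ => hF s) hint
  rw [this]
  simp only [F]
  have h0 : ∑ k ∈ range (n+1), (0:ℝ) ^ k / (Nat.factorial k : ℝ) = 1 := by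
    rw [Finset.sum_range_succ']
    simp
  rw [h0]
  simp
  ring

private lemma fact_le (N j : ℕ) (h : j < N) :
    Nat.factorial (N + j) ≤ N ^ (2*j+1) * Nat.factorial (N - 1 - j) := by
  induction j with
  | zero =>
    obtain ⟨m, rfl⟩ : ∃ m, N = m + 1 := ⟨N - 1, by omega⟩
    simp [Nat.factorial_succ]
  | succ j ih =>
    have hj : j < N := by omega
    have h1 : N - 1 - j = (N - 1 - (j+1)) + 1 := by omega
    have h2 : Nat.factorial (N - 1 - j) = (N - 1 - j) * Nat.factorial (N - 1 - (j+1)) := by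
      rw [h1, Nat.factorial_succ, ← h1]
    have key : (N + (j+1)) * (N - (j+1)) ≤ N * N := by
      obtain ⟨b, hb⟩ : ∃ b, N = b + (j+1) := ⟨N - (j+1), by omega⟩
      subst hb
      have : b + (j+1) + (j+1) - (j+1) = b + (j+1) := by omega
      rw [Nat.add_sub_cancel]
      nlinarith
    calc Nat.factorial (N + (j+1)) = (N + (j+1)) * Nat.factorial (N + j) := by
          rw [show N + (j+1) = (N+j)+1 by omega, Nat.factorial_succ]
      _ ≤ (N + (j+1)) * (N ^ (2*j+1) * Nat.factorial (N - 1 - j)) :=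
          Nat.mul_le_mul_left _ (ih hj)
      _ = (N + (j+1)) * (N - (j+1)) * N ^ (2*j+1) * Nat.factorial (N - 1 - (j+1)) := by
          rw [h2]
          have : N - 1 - j = N - (j+1) := by omega
          rw [this]; ring
      _ ≤ N * N * N ^ (2*j+1) * Nat.factorial (N - 1 - (j+1)) := by
          apply Nat.mul_le_mul_right
          exact Nat.mul_le_mul_right _ key
      _ = N ^ (2*(j+1)+1) * Nat.factorial (N - 1 - (j+1)) := by ring

private lemma sum_half (N : ℕ) (hN : 1 ≤ N) :
    2 * ∑ k ∈ range N, (N:ℝ) ^ k / (Nat.factorial k : ℝ) ≤ Real.exp N := by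
  have hNpos : (0:ℝ) < N := by exact_mod_cast hN
  have hterm : ∀ j ∈ range N,
      (N:ℝ) ^ (N-1-j) / (Nat.factorial (N-1-j) : ℝ)
        ≤ (N:ℝ) ^ (N+j) / (Nat.factorial (N+j) : ℝ) := by
    intro j hj
    rw [mem_range] at hj
    rw [div_le_div_iff₀ (by positivity) (by positivity)]
    have hexp : (N:ℝ) ^ (N+j) = (N:ℝ) ^ (N-1-j) * (N:ℝ) ^ (2*j+1) := by
      rw [← pow_add]; congr 1; omega
    rw [hexp]
    have := fact_le N j hj
    have : (Nat.factorial (N+j) : ℝ) ≤ (N:ℝ) ^ (2*j+1) * (Nat.factorial (N-1-j) : ℝ) := by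
      exact_mod_cast this
    nlinarith [pow_pos hNpos (N-1-j)]
  have hrefl : ∑ k ∈ range N, (N:ℝ) ^ k / (Nat.factorial k : ℝ)
      = ∑ j ∈ range N, (N:ℝ) ^ (N-1-j) / (Nat.factorial (N-1-j) : ℝ) :=
    (Finset.sum_range_reflect (fun k => (N:ℝ) ^ k / (Nat.factorial k : ℝ)) N).symm
  have h1 : ∑ k ∈ range N, (N:ℝ) ^ k / (Nat.factorial k : ℝ)
      ≤ ∑ j ∈ range N, (N:ℝ) ^ (N+j) / (Nat.factorial (N+j) : ℝ) := by
    rw [hrefl]; exact Finset.sum_le_sum hterm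
  have h2 : (∑ k ∈ range N, (N:ℝ) ^ k / (Nat.factorial k : ℝ))
      + ∑ j ∈ range N, (N:ℝ) ^ (N+j) / (Nat.factorial (N+j) : ℝ)
      = ∑ k ∈ range (N+N), (N:ℝ) ^ k / (Nat.factorial k : ℝ) :=
    (Finset.sum_range_add (fun k => (N:ℝ) ^ k / (Nat.factorial k : ℝ)) N N).symm
  have h3 : ∑ k ∈ range (N+N), (N:ℝ) ^ k / (Nat.factorial k : ℝ) ≤ Real.exp N :=
    Real.sum_le_exp_of_nonneg hNpos.le _
  linarith

theorem stmt_1 (N : ℕ) (hN : 1 ≤ N) :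
    (1 : ℝ) / 2 ≤ ∫ s in (0:ℝ)..(N : ℝ),
      s ^ (N - 1) / (Nat.factorial (N - 1) : ℝ) * Real.exp (-s) := by
  obtain ⟨n, rfl⟩ : ∃ n, N = n + 1 := ⟨N - 1, by omega⟩
  simp only [Nat.add_sub_cancel]
  rw [integral_eq n (((n:ℕ)+1 : ℕ) : ℝ)]
  have hS := sum_half (n+1) (by omega)
  have hepos : (0:ℝ) < Real.exp ((n:ℝ)+1) := Real.exp_pos _
  have hexp : Real.exp (-(((n:ℕ)+1 : ℕ) : ℝ)) = 1 / Real.exp ((n:ℝ)+1) := by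
    rw [Real.exp_neg]; push_cast; rw [inv_eq_one_div]
  push_cast at hS ⊢
  have h2 : (Real.exp ((n:ℝ)+1))⁻¹ * ∑ k ∈ range (n+1), ((n:ℝ)+1) ^ k / (Nat.factorial k : ℝ) ≤ 1/2 := by
    rw [inv_mul_le_iff₀ hepos]
    linarith
  rw [Real.exp_neg]
  linarith
end

section
/- Let P : P(X) → P(X) be a Markov operator (preserving total mass and positivity on signed measures) satisfying the Doeblin condition P μ ≥ α ν for all probability measures μ, for some fixed α ∈ (0,1) and probability measure ν. Then for any two probability measures μ_1, μ_2, ‖P μ_1 − P μ_2‖_{TV} ≤ (1−α) ‖μ_1 − μ_2‖_{TV}. -/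
open MeasureTheory

private lemma tv_sub_le {X : Type*} [MeasurableSpace X] (a b : SignedMeasure X)
    (ha : 0 ≤ a) (hb : 0 ≤ b) :
    (a - b).totalVariation Set.univ ≤
      ENNReal.ofReal (a Set.univ) + ENNReal.ofReal (b Set.univ) := by
  obtain ⟨i, hi₁, hi₂, hi₃, hp, hn⟩ := (a - b).toJordanDecomposition_spec
  have hmono : ∀ (c : SignedMeasure X), 0 ≤ c → ∀ j : Set X, MeasurableSet j →
      c j ≤ c Set.univ := by
    intro c hc j hj
    have : c Set.univ = c j + c jᶜ := by
      rw [← VectorMeasure.of_union (disjoint_compl_right) hj hj.compl, Set.union_compl_self]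
    rw [this]
    have := (VectorMeasure.le_iff.mp hc) jᶜ hj.compl
    simp only [VectorMeasure.zero_apply] at this
    linarith
  have hnn : ∀ (c : SignedMeasure X), 0 ≤ c → ∀ j : Set X, 0 ≤ c j := by
    intro c hc j
    have := (VectorMeasure.le_iff'.mp hc) j
    simpa using this
  rw [SignedMeasure.totalVariation, Measure.add_apply, hp, hn,
    SignedMeasure.toMeasureOfZeroLE_apply _ hi₂ hi₁ MeasurableSet.univ,
    SignedMeasure.toMeasureOfLEZero_apply _ hi₃ hi₁.compl MeasurableSet.univ]
  refine add_le_add ?_ ?_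
  · rw [← ENNReal.ofReal_eq_coe_nnreal]
    apply ENNReal.ofReal_le_ofReal
    rw [Set.inter_univ, VectorMeasure.sub_apply]
    have h1 := hmono a ha i hi₁
    have h2 := hnn b hb i
    linarith
  · rw [← ENNReal.ofReal_eq_coe_nnreal]
    apply ENNReal.ofReal_le_ofReal
    rw [Set.inter_univ, VectorMeasure.sub_apply]
    have h1 := hmono b hb iᶜ hi₁.compl
    have h2 := hnn a ha iᶜ
    linarith

theorem stmt_7 {X : Type*} [MeasurableSpace X]
    (P : SignedMeasure X →ₗ[ℝ] SignedMeasure X)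
    (hpos : ∀ μ : SignedMeasure X, 0 ≤ μ → 0 ≤ P μ)
    (hmass : ∀ μ : SignedMeasure X, (P μ) Set.univ = μ Set.univ)
    (α : ℝ) (hα : 0 < α) (hα1 : α < 1)
    (ν : SignedMeasure X) (hν : 0 ≤ ν) (hν1 : ν Set.univ = 1)
    (hDoeblin : ∀ μ : SignedMeasure X, 0 ≤ μ → μ Set.univ = 1 → α • ν ≤ P μ)
    (μ₁ μ₂ : SignedMeasure X)
    (h₁ : 0 ≤ μ₁) (h₁1 : μ₁ Set.univ = 1) (h₂ : 0 ≤ μ₂) (h₂1 : μ₂ Set.univ = 1) :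
    (P μ₁ - P μ₂).totalVariation Set.univ ≤
      ENNReal.ofReal (1 - α) * (μ₁ - μ₂).totalVariation Set.univ := by
  set σ := μ₁ - μ₂ with hσ
  set jp := σ.toJordanDecomposition.posPart with hjp
  set jn := σ.toJordanDecomposition.negPart with hjn
  have hPsub : P μ₁ - P μ₂ = P σ := by rw [hσ, map_sub]
  have hσdec : σ = jp.toSignedMeasure - jn.toSignedMeasure := by
    conv_lhs => rw [← σ.toSignedMeasure_toJordanDecomposition]
    rfl
  set p := jp.toSignedMeasure with hpdef
  set n := jn.toSignedMeasure with hndef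
  have hp0 : 0 ≤ p := Measure.zero_le_toSignedMeasure _
  have hn0 : 0 ≤ n := Measure.zero_le_toSignedMeasure _
  have hσuniv : σ Set.univ = 0 := by
    rw [hσ, VectorMeasure.sub_apply, h₁1, h₂1, sub_self]
  have hpn : p Set.univ = n Set.univ := by
    have h := hσuniv
    rw [hσdec, VectorMeasure.sub_apply] at h
    linarith
  set r := p Set.univ with hr
  have hptoReal : r = (jp Set.univ).toReal := by
    rw [hr]; exact Measure.toSignedMeasure_apply_measurable MeasurableSet.univ
  have hntoReal : r = (jn Set.univ).toReal := by
    rw [hpn]; exact Measure.toSignedMeasure_apply_measurable MeasurableSet.univ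
  have hr0 : 0 ≤ r := by rw [hptoReal]; positivity
  have hjpr : jp Set.univ = ENNReal.ofReal r := by
    rw [hptoReal, ENNReal.ofReal_toReal (measure_ne_top _ _)]
  have hjnr : jn Set.univ = ENNReal.ofReal r := by
    rw [hntoReal, ENNReal.ofReal_toReal (measure_ne_top _ _)]
  have hTVσ : σ.totalVariation Set.univ = ENNReal.ofReal r + ENNReal.ofReal r := by
    rw [SignedMeasure.totalVariation, Measure.add_apply, ← hjp, ← hjn, hjpr, hjnr]
  rcases eq_or_lt_of_le hr0 with hr00 | hrpos
  · -- r = 0 case : σ = 0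
    have hjp0 : jp = 0 := by
      apply Measure.measure_univ_eq_zero.mp
      rw [hjpr, ← hr00, ENNReal.ofReal_zero]
    have hjn0 : jn = 0 := by
      apply Measure.measure_univ_eq_zero.mp
      rw [hjnr, ← hr00, ENNReal.ofReal_zero]
    have hσ0 : σ = 0 := by
      rw [hσdec, hpdef, hndef]
      simp only [hjp0, hjn0, Measure.toSignedMeasure_zero, sub_self]
    rw [hPsub, hσ0, map_zero, SignedMeasure.totalVariation_zero]
    simp
  · -- r > 0 case
    set ρ₁ := r⁻¹ • p with hρ₁
    set ρ₂ := r⁻¹ • n with hρ₂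
    have hsmul_nonneg : ∀ (c : ℝ) (m : SignedMeasure X), 0 ≤ c → 0 ≤ m → 0 ≤ c • m := by
      intro c m hc hm
      rw [VectorMeasure.le_iff']
      intro j
      have := (VectorMeasure.le_iff'.mp hm) j
      simp only [VectorMeasure.zero_apply] at this ⊢
      rw [VectorMeasure.smul_apply]
      exact mul_nonneg hc this
    have hρ₁0 : 0 ≤ ρ₁ := hsmul_nonneg _ _ (by positivity) hp0
    have hρ₂0 : 0 ≤ ρ₂ := hsmul_nonneg _ _ (by positivity) hn0
    have hρ₁1 : ρ₁ Set.univ = 1 := by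
      rw [hρ₁, VectorMeasure.smul_apply, smul_eq_mul]
      exact inv_mul_cancel₀ (ne_of_gt hrpos)
    have hρ₂1 : ρ₂ Set.univ = 1 := by
      rw [hρ₂, VectorMeasure.smul_apply, smul_eq_mul, ← hpn]
      exact inv_mul_cancel₀ (ne_of_gt hrpos)
    have hD₁ := hDoeblin ρ₁ hρ₁0 hρ₁1
    have hD₂ := hDoeblin ρ₂ hρ₂0 hρ₂1
    set a₁ := P ρ₁ - α • ν with ha₁
    set a₂ := P ρ₂ - α • ν with ha₂
    have ha₁0 : 0 ≤ a₁ := by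
      rw [VectorMeasure.le_iff']
      intro j
      have := (VectorMeasure.le_iff'.mp hD₁) j
      simp only [VectorMeasure.zero_apply, ha₁, VectorMeasure.sub_apply]
      linarith
    have ha₂0 : 0 ≤ a₂ := by
      rw [VectorMeasure.le_iff']
      intro j
      have := (VectorMeasure.le_iff'.mp hD₂) j
      simp only [VectorMeasure.zero_apply, ha₂, VectorMeasure.sub_apply]
      linarith
    have ha₁u : a₁ Set.univ = 1 - α := by
      rw [ha₁, VectorMeasure.sub_apply, hmass, hρ₁1, VectorMeasure.smul_apply, hν1,
        smul_eq_mul, mul_one]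
    have ha₂u : a₂ Set.univ = 1 - α := by
      rw [ha₂, VectorMeasure.sub_apply, hmass, hρ₂1, VectorMeasure.smul_apply, hν1,
        smul_eq_mul, mul_one]
    have hpρ : p = r • ρ₁ := by
      rw [hρ₁, smul_smul, mul_inv_cancel₀ (ne_of_gt hrpos), one_smul]
    have hnρ : n = r • ρ₂ := by
      rw [hρ₂, smul_smul, mul_inv_cancel₀ (ne_of_gt hrpos), one_smul]
    have hPσ : P σ = r • a₁ - r • a₂ := by
      have h1 : P p = r • P ρ₁ := by rw [hpρ, _root_.map_smul]
      have h2 : P n = r • P ρ₂ := by rw [hnρ, _root_.map_smul]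
      rw [hσdec, map_sub, h1, h2, ha₁, ha₂, smul_sub, smul_sub]
      abel
    have hsmul_nonneg₁ : 0 ≤ r • a₁ := hsmul_nonneg _ _ hr0 ha₁0
    have hsmul_nonneg₂ : 0 ≤ r • a₂ := hsmul_nonneg _ _ hr0 ha₂0
    calc (P μ₁ - P μ₂).totalVariation Set.univ
        = (r • a₁ - r • a₂).totalVariation Set.univ := by rw [hPsub, hPσ]
      _ ≤ ENNReal.ofReal ((r • a₁) Set.univ) + ENNReal.ofReal ((r • a₂) Set.univ) :=
          tv_sub_le _ _ hsmul_nonneg₁ hsmul_nonneg₂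
      _ = ENNReal.ofReal (1 - α) * (ENNReal.ofReal r + ENNReal.ofReal r) := by
          rw [VectorMeasure.smul_apply, VectorMeasure.smul_apply, ha₁u, ha₂u, smul_eq_mul,
            ENNReal.ofReal_mul hr0, mul_add, mul_comm]
      _ = ENNReal.ofReal (1 - α) * (μ₁ - μ₂).totalVariation Set.univ := by
          rw [← hσ, hTVσ]
end

section
/- Let P_t : P(X) → P(X) be a Markov semigroup satisfying the Doeblin condition P_{t_0} μ ≥ α ν for all μ ∈ P(X), with t_0 > 0, α ∈ (0,1), ν a probability measure. Then P_t has a unique invariant probability measure μ*, and for all probability measures μ and all t ≥ 0: ‖P_t μ − μ*‖_{TV} ≤ (1/(1−α)) e^{−λ t} ‖μ − μ*‖_{TV}, where λ = −ln(1−α)/t_0. -/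
open MeasureTheory

namespace Stmt8Aux

variable {X : Type*} [MeasurableSpace X]

lemma nn_apply {σ : SignedMeasure X} (h : 0 ≤ σ) (A : Set X) : 0 ≤ σ A := by
  simpa using (VectorMeasure.le_iff'.mp h A)

lemma apply_le_univ {σ : SignedMeasure X} (h : 0 ≤ σ) (A : Set X) : σ A ≤ σ Set.univ := by
  by_cases hA : MeasurableSet A
  · have : σ Set.univ = σ A + σ Aᶜ := by
      rw [← VectorMeasure.of_union disjoint_compl_right hA hA.compl, Set.union_compl_self]
    rw [this]
    linarith [nn_apply h Aᶜ]
  · rw [σ.not_measurable hA]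
    exact nn_apply h Set.univ

lemma nn_add {σ τ : SignedMeasure X} (h1 : 0 ≤ σ) (h2 : 0 ≤ τ) : 0 ≤ σ + τ := by
  rw [VectorMeasure.le_iff']
  intro i
  simp only [VectorMeasure.add_apply, VectorMeasure.zero_apply]
  exact add_nonneg (nn_apply h1 i) (nn_apply h2 i)

lemma nn_smul {c : ℝ} {σ : SignedMeasure X} (hc : 0 ≤ c) (h : 0 ≤ σ) : 0 ≤ c • σ := by
  rw [VectorMeasure.le_iff']
  intro i
  simp only [VectorMeasure.smul_apply, VectorMeasure.zero_apply, smul_eq_mul]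
  exact mul_nonneg hc (nn_apply h i)

lemma nn_sub {σ τ : SignedMeasure X} (h : σ ≤ τ) : 0 ≤ τ - σ := by
  rw [VectorMeasure.le_iff']
  intro i
  simp only [VectorMeasure.sub_apply, VectorMeasure.zero_apply]
  have := VectorMeasure.le_iff'.mp h i
  linarith

/-- total variation as a real number -/
noncomputable def tv (σ : SignedMeasure X) : ℝ := (σ.totalVariation Set.univ).toReal

lemma tv_nonneg (σ : SignedMeasure X) : 0 ≤ tv σ := ENNReal.toReal_nonneg

lemma totalVariation_ne_top (σ : SignedMeasure X) : σ.totalVariation Set.univ ≠ ⊤ := by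
  rw [SignedMeasure.totalVariation, Measure.add_apply]
  exact ENNReal.add_ne_top.mpr ⟨measure_ne_top _ _, measure_ne_top _ _⟩

lemma totalVariation_eq_ofReal (σ : SignedMeasure X) :
    σ.totalVariation Set.univ = ENNReal.ofReal (tv σ) := by
  rw [tv, ENNReal.ofReal_toReal (totalVariation_ne_top σ)]

lemma tv_hahn (σ : SignedMeasure X) :
    ∃ i : Set X, MeasurableSet i ∧ tv σ = σ i - σ iᶜ ∧ 0 ≤ σ i ∧ σ iᶜ ≤ 0 := by
  obtain ⟨i, hi₁, hi₂, hi₃, hpos, hneg⟩ := σ.toJordanDecomposition_spec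
  refine ⟨i, hi₁, ?_, σ.nonneg_of_zero_le_restrict (σ.zero_le_restrict_subset hi₁
    (Set.Subset.refl i) hi₂), σ.nonpos_of_restrict_le_zero (σ.restrict_le_zero_subset
    hi₁.compl (Set.Subset.refl iᶜ) hi₃)⟩
  rw [tv, SignedMeasure.totalVariation, Measure.add_apply, hpos, hneg,
    SignedMeasure.toMeasureOfZeroLE_apply _ hi₂ hi₁ MeasurableSet.univ,
    SignedMeasure.toMeasureOfLEZero_apply _ hi₃ hi₁.compl MeasurableSet.univ]
  rw [← ENNReal.coe_add, ENNReal.coe_toReal, NNReal.coe_add, NNReal.coe_mk, NNReal.coe_mk]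
  simp [sub_eq_add_neg]




lemma tv_le_of_decomp {σ ρ₁ ρ₂ : SignedMeasure X} (h : σ = ρ₁ - ρ₂)
    (h1 : 0 ≤ ρ₁) (h2 : 0 ≤ ρ₂) : tv σ ≤ ρ₁ Set.univ + ρ₂ Set.univ := by
  obtain ⟨i, hi, htv, hpos, hneg⟩ := tv_hahn σ
  have e1 : σ i = ρ₁ i - ρ₂ i := by rw [h, VectorMeasure.sub_apply]
  have e2 : σ iᶜ = ρ₁ iᶜ - ρ₂ iᶜ := by rw [h, VectorMeasure.sub_apply]
  have := apply_le_univ h1 i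
  have := apply_le_univ h2 iᶜ
  have := nn_apply h2 i
  have := nn_apply h1 iᶜ
  rw [htv]
  linarith

lemma tv_of_nonneg {σ : SignedMeasure X} (h : 0 ≤ σ) : tv σ = σ Set.univ := by
  obtain ⟨i, hi, htv, hpos, hneg⟩ := tv_hahn σ
  have h0 : σ iᶜ = 0 := le_antisymm hneg (nn_apply h iᶜ)
  have : σ Set.univ = σ i + σ iᶜ := by
    rw [← VectorMeasure.of_union disjoint_compl_right hi hi.compl, Set.union_compl_self]
  rw [htv, this, h0]
  ring

lemma eq_zero_of_tv_zero {σ : SignedMeasure X} (h : tv σ = 0) : σ = 0 := by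
  have h0 : σ.totalVariation Set.univ = 0 := by
    rw [totalVariation_eq_ofReal, h, ENNReal.ofReal_zero]
  ext A hA
  rw [VectorMeasure.zero_apply]
  exact σ.null_of_totalVariation_zero (le_antisymm (h0 ▸ measure_mono (Set.subset_univ A))
    zero_le)

lemma jordan_decomp (σ : SignedMeasure X) :
    σ = σ.toJordanDecomposition.posPart.toSignedMeasure
        - σ.toJordanDecomposition.negPart.toSignedMeasure := by
  conv_lhs => rw [← σ.toSignedMeasure_toJordanDecomposition]
  rfl

lemma toSignedMeasure_nonneg (m : Measure X) [IsFiniteMeasure m] : 0 ≤ m.toSignedMeasure := by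
  rw [VectorMeasure.le_iff]
  intro i hi
  rw [VectorMeasure.zero_apply, Measure.toSignedMeasure_apply_measurable hi]
  exact ENNReal.toReal_nonneg

lemma tv_eq_add (σ : SignedMeasure X) :
    tv σ = σ.toJordanDecomposition.posPart.toSignedMeasure Set.univ
         + σ.toJordanDecomposition.negPart.toSignedMeasure Set.univ := by
  rw [tv, SignedMeasure.totalVariation, Measure.add_apply,
    Measure.toSignedMeasure_apply_measurable MeasurableSet.univ,
    Measure.toSignedMeasure_apply_measurable MeasurableSet.univ,
    ENNReal.toReal_add (measure_ne_top _ _) (measure_ne_top _ _)]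
  rfl


lemma tv_zero : tv (0 : SignedMeasure X) = 0 := by
  rw [tv, SignedMeasure.totalVariation_zero]; simp

section Markov

variable (P : ℝ → (SignedMeasure X →ₗ[ℝ] SignedMeasure X))

lemma tv_nonexpansive
    (hpos : ∀ t : ℝ, 0 ≤ t → ∀ μ : SignedMeasure X, 0 ≤ μ → 0 ≤ P t μ)
    (hmass : ∀ t : ℝ, 0 ≤ t → ∀ μ : SignedMeasure X, (P t μ) Set.univ = μ Set.univ)
    (t : ℝ) (ht : 0 ≤ t) (σ : SignedMeasure X) : tv (P t σ) ≤ tv σ := by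
  set p := σ.toJordanDecomposition.posPart.toSignedMeasure with hpdef
  set n := σ.toJordanDecomposition.negPart.toSignedMeasure with hndef
  have hp : 0 ≤ p := toSignedMeasure_nonneg _
  have hn : 0 ≤ n := toSignedMeasure_nonneg _
  have hPt : P t σ = P t p - P t n := by
    conv_lhs => rw [jordan_decomp σ]
    rw [map_sub]
  have h := tv_le_of_decomp hPt (hpos t ht p hp) (hpos t ht n hn)
  rw [hmass t ht p, hmass t ht n] at h
  rw [tv_eq_add σ]
  exact h

lemma tv_doeblin_step
    (hpos : ∀ t : ℝ, 0 ≤ t → ∀ μ : SignedMeasure X, 0 ≤ μ → 0 ≤ P t μ)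
    (hmass : ∀ t : ℝ, 0 ≤ t → ∀ μ : SignedMeasure X, (P t μ) Set.univ = μ Set.univ)
    (t₀ : ℝ) (ht₀ : 0 < t₀) (α : ℝ) (hα : 0 < α) (hα1 : α < 1)
    (ν : SignedMeasure X) (hν : 0 ≤ ν) (hν1 : ν Set.univ = 1)
    (hDoeblin : ∀ μ : SignedMeasure X, 0 ≤ μ → μ Set.univ = 1 → α • ν ≤ P t₀ μ)
    (σ : SignedMeasure X) (hσ0 : σ Set.univ = 0) :
    tv (P t₀ σ) ≤ (1 - α) * tv σ := by
  set p := σ.toJordanDecomposition.posPart.toSignedMeasure with hpdef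
  set n := σ.toJordanDecomposition.negPart.toSignedMeasure with hndef
  have hp : 0 ≤ p := toSignedMeasure_nonneg _
  have hn : 0 ≤ n := toSignedMeasure_nonneg _
  have hσ : σ = p - n := jordan_decomp σ
  have hsum : p Set.univ + n Set.univ = tv σ := (tv_eq_add σ).symm
  have hdiff : p Set.univ - n Set.univ = 0 := by
    rw [← VectorMeasure.sub_apply, ← hσ, hσ0]
  set m := tv σ / 2 with hm
  have hpm : p Set.univ = m := by rw [hm]; linarith
  have hnm : n Set.univ = m := by rw [hm]; linarith
  rcases eq_or_lt_of_le (tv_nonneg σ) with h0 | h0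
  · have : σ = 0 := eq_zero_of_tv_zero h0.symm
    rw [this, map_zero, tv_zero]
    simp
  · have hm0 : 0 < m := by rw [hm]; linarith
    set μ₁ := m⁻¹ • p with hμ₁
    set μ₂ := m⁻¹ • n with hμ₂
    have hμ₁nn : 0 ≤ μ₁ := nn_smul (inv_nonneg.mpr hm0.le) hp
    have hμ₂nn : 0 ≤ μ₂ := nn_smul (inv_nonneg.mpr hm0.le) hn
    have hμ₁u : μ₁ Set.univ = 1 := by
      rw [hμ₁, VectorMeasure.smul_apply, hpm, smul_eq_mul, inv_mul_cancel₀ hm0.ne']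
    have hμ₂u : μ₂ Set.univ = 1 := by
      rw [hμ₂, VectorMeasure.smul_apply, hnm, smul_eq_mul, inv_mul_cancel₀ hm0.ne']
    set ρ₁ := m • (P t₀ μ₁ - α • ν) with hρ₁
    set ρ₂ := m • (P t₀ μ₂ - α • ν) with hρ₂
    have hρ₁nn : 0 ≤ ρ₁ := nn_smul hm0.le (nn_sub (hDoeblin μ₁ hμ₁nn hμ₁u))
    have hρ₂nn : 0 ≤ ρ₂ := nn_smul hm0.le (nn_sub (hDoeblin μ₂ hμ₂nn hμ₂u))
    have hkey : P t₀ σ = ρ₁ - ρ₂ := by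
      have h1 : m • μ₁ = p := by rw [hμ₁, smul_smul, mul_inv_cancel₀ hm0.ne', one_smul]
      have h2 : m • μ₂ = n := by rw [hμ₂, smul_smul, mul_inv_cancel₀ hm0.ne', one_smul]
      rw [hρ₁, hρ₂, smul_sub, smul_sub, ← _root_.map_smul, ← _root_.map_smul, h1, h2]
      rw [hσ, map_sub]
      abel
    have hmassρ : ∀ (μ' : SignedMeasure X), 0 ≤ μ' → μ' Set.univ = 1 →
        (m • (P t₀ μ' - α • ν)) Set.univ = m * (1 - α) := by
      intro μ' h1 h2
      rw [VectorMeasure.smul_apply, VectorMeasure.sub_apply, hmass t₀ ht₀.le, h2,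
        VectorMeasure.smul_apply, hν1, smul_eq_mul, smul_eq_mul, mul_one]
    have h := tv_le_of_decomp hkey hρ₁nn hρ₂nn
    rw [hρ₁, hρ₂, hmassρ μ₁ hμ₁nn hμ₁u, hmassρ μ₂ hμ₂nn hμ₂u] at h
    calc tv (P t₀ σ) ≤ m * (1 - α) + m * (1 - α) := h
      _ = (1 - α) * tv σ := by rw [hm]; ring

lemma tv_iterate
    (hid : P 0 = LinearMap.id)
    (hsemi : ∀ s t : ℝ, 0 ≤ s → 0 ≤ t → P (s + t) = (P s).comp (P t))
    (hpos : ∀ t : ℝ, 0 ≤ t → ∀ μ : SignedMeasure X, 0 ≤ μ → 0 ≤ P t μ)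
    (hmass : ∀ t : ℝ, 0 ≤ t → ∀ μ : SignedMeasure X, (P t μ) Set.univ = μ Set.univ)
    (t₀ : ℝ) (ht₀ : 0 < t₀) (α : ℝ) (hα : 0 < α) (hα1 : α < 1)
    (ν : SignedMeasure X) (hν : 0 ≤ ν) (hν1 : ν Set.univ = 1)
    (hDoeblin : ∀ μ : SignedMeasure X, 0 ≤ μ → μ Set.univ = 1 → α • ν ≤ P t₀ μ)
    (σ : SignedMeasure X) (hσ0 : σ Set.univ = 0) :
    ∀ k : ℕ, tv (P (k * t₀) σ) ≤ (1 - α) ^ k * tv σ := by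
  intro k
  induction k with
  | zero => simp [hid, tv_nonneg]
  | succ k ih =>
    have hstep : P ((k + 1 : ℕ) * t₀) σ = P t₀ (P (k * t₀) σ) := by
      have : ((k + 1 : ℕ) : ℝ) * t₀ = t₀ + (k : ℝ) * t₀ := by push_cast; ring
      rw [this, hsemi t₀ ((k : ℝ) * t₀) ht₀.le (by positivity), LinearMap.comp_apply]
    have hmass' : (P ((k : ℝ) * t₀) σ) Set.univ = 0 := by
      rw [hmass _ (by positivity), hσ0]
    calc tv (P ((k + 1 : ℕ) * t₀) σ) = tv (P t₀ (P ((k : ℝ) * t₀) σ)) := by rw [hstep]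
      _ ≤ (1 - α) * tv (P ((k : ℝ) * t₀) σ) :=
          tv_doeblin_step P hpos hmass t₀ ht₀ α hα hα1 ν hν hν1 hDoeblin _ hmass'
      _ ≤ (1 - α) * ((1 - α) ^ k * tv σ) := by
          have := ih
          nlinarith [tv_nonneg (P ((k : ℝ) * t₀) σ)]
      _ = (1 - α) ^ (k + 1) * tv σ := by ring

end Markov

lemma exists_tsum_signedMeasure (c : ℕ → ℝ) (hc : ∀ n, 0 ≤ c n) (hcs : Summable c)
    (σs : ℕ → SignedMeasure X) (hσnn : ∀ n, 0 ≤ σs n) (hσu : ∀ n, (σs n) Set.univ = 1) :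
    ∃ M : SignedMeasure X, ∀ A : Set X, M A = ∑' n, c n * σs n A := by
  have bound : ∀ n (A : Set X), c n * σs n A ≤ c n := by
    intro n A
    have h1 := apply_le_univ (hσnn n) A
    have h2 := hσu n
    nlinarith [hc n]
  have nonneg : ∀ n (A : Set X), 0 ≤ c n * σs n A := fun n A =>
    mul_nonneg (hc n) (nn_apply (hσnn n) A)
  have hsummA : ∀ A : Set X, Summable fun n => c n * σs n A := fun A =>
    Summable.of_nonneg_of_le (fun n => nonneg n A) (fun n => bound n A) hcs
  refine ⟨⟨fun A => ∑' n, c n * σs n A, ?_, ?_, ?_⟩, fun _ => rfl⟩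
  · simp
  · intro i hi
    simp [VectorMeasure.not_measurable _ hi]
  · intro f hf₁ hf₂
    have hfib : ∀ n, HasSum (fun i => c n * σs n (f i)) (c n * σs n (⋃ i, f i)) := fun n =>
      ((σs n).m_iUnion hf₁ hf₂).mul_left (c n)
    set H : ℕ × ℕ → ℝ := fun p => c p.1 * σs p.1 (f p.2) with hH
    have hHs : Summable H := by
      rw [summable_prod_of_nonneg (fun p => nonneg p.1 (f p.2))]
      refine ⟨fun n => (hfib n).summable, ?_⟩
      refine Summable.of_nonneg_of_le (fun n => ?_) (fun n => ?_) hcs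
      · rw [(hfib n).tsum_eq]; exact nonneg n _
      · rw [(hfib n).tsum_eq]; exact bound n _
    have hTot : HasSum (fun n => c n * σs n (⋃ i, f i)) (∑' p, H p) :=
      HasSum.prod_fiberwise hHs.hasSum hfib
    have hswap : HasSum (fun p : ℕ × ℕ => c p.2 * σs p.2 (f p.1)) (∑' p, H p) := by
      have : HasSum (H ∘ (Equiv.prodComm ℕ ℕ)) (∑' p, H p) :=
        (Equiv.hasSum_iff (Equiv.prodComm ℕ ℕ)).mpr hHs.hasSum
      exact this
    have hfin : HasSum (fun i => ∑' n, c n * σs n (f i)) (∑' p, H p) :=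
      HasSum.prod_fiberwise hswap (fun i => (hsummA (f i)).hasSum)
    exact hTot.tsum_eq ▸ hfin

lemma sum_apply (s : Finset ℕ) (g : ℕ → SignedMeasure X) (A : Set X) :
    (∑ n ∈ s, g n) A = ∑ n ∈ s, g n A := by
  classical
  induction s using Finset.induction_on with
  | empty => simp
  | insert _ _ hx ih => rw [Finset.sum_insert hx, VectorMeasure.add_apply, ih, Finset.sum_insert hx]

set_option maxHeartbeats 1000000 in
lemma exists_invariant
    (P : ℝ → (SignedMeasure X →ₗ[ℝ] SignedMeasure X))
    (hpos : ∀ t : ℝ, 0 ≤ t → ∀ μ : SignedMeasure X, 0 ≤ μ → 0 ≤ P t μ)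
    (hmass : ∀ t : ℝ, 0 ≤ t → ∀ μ : SignedMeasure X, (P t μ) Set.univ = μ Set.univ)
    (t₀ : ℝ) (ht₀ : 0 < t₀) (α : ℝ) (hα : 0 < α) (hα1 : α < 1)
    (ν : SignedMeasure X) (hν : 0 ≤ ν) (hν1 : ν Set.univ = 1)
    (hDoeblin : ∀ μ : SignedMeasure X, 0 ≤ μ → μ Set.univ = 1 → α • ν ≤ P t₀ μ) :
    ∃ μstar : SignedMeasure X, 0 ≤ μstar ∧ μstar Set.univ = 1 ∧ P t₀ μstar = μstar := by
  have h1α : 0 < 1 - α := by linarith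
  set f : SignedMeasure X → SignedMeasure X :=
    fun σ => (1 - α)⁻¹ • (P t₀ σ - α • ν) with hf
  set νs : ℕ → SignedMeasure X := fun n => f^[n] ν with hνs
  have hν0 : νs 0 = ν := rfl
  have hνsucc : ∀ n, νs (n + 1) = f (νs n) := by
    intro n
    rw [hνs]
    exact Function.iterate_succ_apply' f n ν
  have hind : ∀ n, 0 ≤ νs n ∧ (νs n) Set.univ = 1 := by
    intro n
    induction n with
    | zero => exact ⟨hν, hν1⟩
    | succ n ih =>
      rw [hνsucc n, hf]
      constructor
      · exact nn_smul (inv_nonneg.mpr h1α.le) (nn_sub (hDoeblin (νs n) ih.1 ih.2))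
      · rw [VectorMeasure.smul_apply, VectorMeasure.sub_apply, hmass t₀ ht₀.le, ih.2,
          VectorMeasure.smul_apply, hν1, smul_eq_mul, smul_eq_mul, mul_one,
          inv_mul_cancel₀ h1α.ne']
  have hstep : ∀ n, P t₀ (νs n) = α • ν + (1 - α) • νs (n + 1) := by
    intro n
    rw [hνsucc n, hf, smul_smul, mul_inv_cancel₀ h1α.ne', one_smul]
    abel
  set c : ℕ → ℝ := fun n => α * (1 - α) ^ n with hc
  have hcnn : ∀ n, 0 ≤ c n := fun n => mul_nonneg hα.le (pow_nonneg h1α.le n)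
  have hgs : Summable fun n : ℕ => (1 - α) ^ n :=
    summable_geometric_of_lt_one h1α.le (by linarith)
  have hcs : Summable c := hgs.mul_left α
  have hctsum : ∑' n, c n = 1 := by
    rw [hc, tsum_mul_left, tsum_geometric_of_lt_one h1α.le (by linarith)]
    field_simp
    rw [sub_sub_cancel, div_self hα.ne']
  obtain ⟨M, hM⟩ := exists_tsum_signedMeasure c hcnn hcs νs (fun n => (hind n).1)
    (fun n => (hind n).2)
  have hsummA : ∀ A : Set X, Summable fun n => c n * νs n A := by
    intro A
    refine Summable.of_nonneg_of_le (fun n => mul_nonneg (hcnn n) (nn_apply (hind n).1 A))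
      (fun n => ?_) hcs
    have h1 := apply_le_univ (hind n).1 A
    have h2 := (hind n).2
    nlinarith [hcnn n]
  have hMnn : 0 ≤ M := by
    rw [VectorMeasure.le_iff']
    intro A
    rw [VectorMeasure.zero_apply, hM]
    exact tsum_nonneg fun n => mul_nonneg (hcnn n) (nn_apply (hind n).1 A)
  have hMuniv : M Set.univ = 1 := by
    rw [hM]
    have : ∀ n, c n * νs n Set.univ = c n := by
      intro n; rw [(hind n).2, mul_one]
    rw [tsum_congr this, hctsum]
  set S : ℕ → SignedMeasure X := fun k => ∑ n ∈ Finset.range k, c n • νs n with hS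
  have hSA : ∀ k (A : Set X), S k A = ∑ n ∈ Finset.range k, c n * νs n A := by
    intro k A
    rw [hS, sum_apply]
    exact Finset.sum_congr rfl fun n _ => by rw [VectorMeasure.smul_apply, smul_eq_mul]
  have htailc : ∀ k : ℕ, ∑' n, c (n + k) = (1 - α) ^ k := by
    intro k
    have : ∀ n, c (n + k) = (1 - α) ^ k * c n := by
      intro n; rw [hc]; ring
    rw [tsum_congr this, tsum_mul_left, hctsum, mul_one]
  have htail : ∀ (k : ℕ) (A : Set X), M A - S k A = ∑' n, c (n + k) * νs (n + k) A := by
    intro k A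
    have := (Summable.sum_add_tsum_nat_add (f := fun n => c n * νs n A) k (hsummA A)).symm
    rw [hM A, this, hSA k A]
    ring
  have htail_nn : ∀ (k : ℕ) (A : Set X), 0 ≤ M A - S k A := by
    intro k A
    rw [htail]
    exact tsum_nonneg fun n => mul_nonneg (hcnn _) (nn_apply (hind _).1 A)
  have htail_le : ∀ (k : ℕ) (A : Set X), M A - S k A ≤ (1 - α) ^ k := by
    intro k A
    rw [htail, ← htailc k]
    refine Summable.tsum_le_tsum (fun n => ?_) ?_ ?_
    · have h1 := apply_le_univ (hind (n + k)).1 A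
      have h2 := (hind (n + k)).2
      nlinarith [hcnn (n + k)]
    · exact ((hsummA A).comp_injective (add_left_injective k))
    · exact hcs.comp_injective (add_left_injective k)
  have hMSnn : ∀ k, 0 ≤ M - S k := by
    intro k
    rw [VectorMeasure.le_iff']
    intro A
    rw [VectorMeasure.zero_apply, VectorMeasure.sub_apply]
    exact htail_nn k A
  have hMSu : ∀ k, (M - S k) Set.univ = (1 - α) ^ k := by
    intro k
    rw [VectorMeasure.sub_apply, htail k Set.univ, ← htailc k]
    exact tsum_congr fun n => by rw [(hind _).2, mul_one]
  have hgeo : ∀ k : ℕ, ∑ n ∈ Finset.range k, c n = 1 - (1 - α) ^ k := by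
    intro k
    rw [hc, ← Finset.mul_sum, geom_sum_eq (by linarith : (1 : ℝ) - α ≠ 1)]
    rw [show (1:ℝ) - α - 1 = -α from by ring, mul_comm, div_mul_eq_mul_div,
      div_eq_iff (by linarith : -α ≠ (0:ℝ))]
    ring
  have hPSA : ∀ (k : ℕ) (A : Set X),
      P t₀ (S k) A = S (k + 1) A - α * (1 - α) ^ k * ν A := by
    intro k A
    have e1 : P t₀ (S k) = ∑ n ∈ Finset.range k, c n • (α • ν + (1 - α) • νs (n + 1)) := by
      rw [hS, map_sum]
      exact Finset.sum_congr rfl fun n _ => by rw [LinearMap.map_smul, hstep n]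
    rw [e1, sum_apply]
    have e2 : ∀ n ∈ Finset.range k, (c n • (α • ν + (1 - α) • νs (n + 1))) A
        = c n * α * ν A + c (n + 1) * νs (n + 1) A := by
      intro n _
      rw [VectorMeasure.smul_apply, VectorMeasure.add_apply, VectorMeasure.smul_apply,
        VectorMeasure.smul_apply]
      simp only [smul_eq_mul]
      rw [hc]
      ring
    rw [Finset.sum_congr rfl e2, Finset.sum_add_distrib]
    have e3 : ∑ n ∈ Finset.range k, c n * α * ν A
        = (1 - (1 - α) ^ k) * α * ν A := by
      rw [← Finset.sum_mul, ← Finset.sum_mul, hgeo k]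
    have e4 : S (k + 1) A = c 0 * νs 0 A + ∑ n ∈ Finset.range k, c (n + 1) * νs (n + 1) A := by
      rw [hSA, Finset.sum_range_succ']
      ring
    have hc0 : c 0 = α := by rw [hc]; simp
    rw [e3, e4, hν0, hc0]
    ring
  have hfix : ∀ (A : Set X), MeasurableSet A → P t₀ M A = M A := by
    intro A hA
    have key : ∀ k : ℕ, |P t₀ M A - M A| ≤ 3 * (1 - α) ^ k := by
      intro k
      have hd : P t₀ M = P t₀ (S k) + P t₀ (M - S k) := by
        rw [← map_add]
        congr 1
        abel
      have hr1 : 0 ≤ (P t₀ (M - S k)) A := nn_apply (hpos t₀ ht₀.le _ (hMSnn k)) A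
      have hr2 : (P t₀ (M - S k)) A ≤ (1 - α) ^ k := by
        calc (P t₀ (M - S k)) A ≤ (P t₀ (M - S k)) Set.univ :=
              apply_le_univ (hpos t₀ ht₀.le _ (hMSnn k)) A
          _ = (1 - α) ^ k := by rw [hmass t₀ ht₀.le, hMSu k]
      have hPMA : P t₀ M A = S (k + 1) A - α * (1 - α) ^ k * ν A + (P t₀ (M - S k)) A := by
        rw [hd, VectorMeasure.add_apply, hPSA k A]
      have hm1 := htail_nn (k + 1) A
      have hm2 := htail_le (k + 1) A
      have hν2 : 0 ≤ ν A := nn_apply hν A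
      have hν3 : ν A ≤ 1 := by
        have := apply_le_univ hν A
        rwa [hν1] at this
      have hp1 : 0 ≤ (1 - α) ^ k := pow_nonneg h1α.le k
      have hp2 : (1 - α) ^ (k + 1) ≤ (1 - α) ^ k := by
        rw [pow_succ]
        nlinarith
      have hq1 : 0 ≤ α * (1 - α) ^ k * ν A :=
        mul_nonneg (mul_nonneg hα.le hp1) hν2
      have hq2 : α * (1 - α) ^ k * ν A ≤ (1 - α) ^ k := by
        have h5 : α * (1 - α) ^ k * ν A ≤ α * (1 - α) ^ k * 1 :=
          mul_le_mul_of_nonneg_left hν3 (mul_nonneg hα.le hp1)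
        nlinarith
      rw [hPMA, abs_le]
      constructor <;> linarith
    have htend : Filter.Tendsto (fun k : ℕ => 3 * (1 - α) ^ k) Filter.atTop (nhds 0) := by
      have := tendsto_pow_atTop_nhds_zero_of_lt_one h1α.le (by linarith : (1 : ℝ) - α < 1)
      simpa using this.const_mul 3
    have habs : |P t₀ M A - M A| ≤ 0 := ge_of_tendsto' htend key
    have := abs_nonneg (P t₀ M A - M A)
    have h0 : |P t₀ M A - M A| = 0 := le_antisymm habs this
    have := abs_eq_zero.mp h0
    linarith [sub_eq_zero.mp this]
  refine ⟨M, hMnn, hMuniv, ?_⟩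
  ext A hA
  exact hfix A hA

end Stmt8Aux

set_option maxHeartbeats 1000000
open Stmt8Aux

theorem stmt_8 {X : Type*} [MeasurableSpace X]
    (P : ℝ → (SignedMeasure X →ₗ[ℝ] SignedMeasure X))
    (hid : P 0 = LinearMap.id)
    (hsemi : ∀ s t : ℝ, 0 ≤ s → 0 ≤ t → P (s + t) = (P s).comp (P t))
    (hpos : ∀ t : ℝ, 0 ≤ t → ∀ μ : SignedMeasure X, 0 ≤ μ → 0 ≤ P t μ)
    (hmass : ∀ t : ℝ, 0 ≤ t → ∀ μ : SignedMeasure X, (P t μ) Set.univ = μ Set.univ)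
    (t₀ : ℝ) (ht₀ : 0 < t₀) (α : ℝ) (hα : 0 < α) (hα1 : α < 1)
    (ν : SignedMeasure X) (hν : 0 ≤ ν) (hν1 : ν Set.univ = 1)
    (hDoeblin : ∀ μ : SignedMeasure X, 0 ≤ μ → μ Set.univ = 1 → α • ν ≤ P t₀ μ) :
    ∃ μstar : SignedMeasure X, 0 ≤ μstar ∧ μstar Set.univ = 1 ∧
      (∀ t : ℝ, 0 ≤ t → P t μstar = μstar) ∧
      (∀ μ' : SignedMeasure X, 0 ≤ μ' → μ' Set.univ = 1 →
        (∀ t : ℝ, 0 ≤ t → P t μ' = μ') → μ' = μstar) ∧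
      (∀ μ : SignedMeasure X, 0 ≤ μ → μ Set.univ = 1 → ∀ t : ℝ, 0 ≤ t →
        (P t μ - μstar).totalVariation Set.univ ≤
          ENNReal.ofReal ((1 / (1 - α)) * Real.exp (-(-Real.log (1 - α) / t₀) * t)) *
            (μ - μstar).totalVariation Set.univ) := by
  obtain ⟨μstar, hstar_nn, hstar_u, hstar_fix⟩ :=
    exists_invariant P hpos hmass t₀ ht₀ α hα hα1 ν hν hν1 hDoeblin
  have h1α : 0 < 1 - α := by linarith
  have fix_unique : ∀ μ₁ μ₂ : SignedMeasure X, 0 ≤ μ₁ → μ₁ Set.univ = 1 →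
      0 ≤ μ₂ → μ₂ Set.univ = 1 → P t₀ μ₁ = μ₁ → P t₀ μ₂ = μ₂ → μ₁ = μ₂ := by
    intro μ₁ μ₂ h1 h2 h3 h4 hf1 hf2
    have hσ0 : (μ₁ - μ₂) Set.univ = 0 := by
      rw [VectorMeasure.sub_apply, h2, h4]; ring
    have hPσ : P t₀ (μ₁ - μ₂) = μ₁ - μ₂ := by rw [map_sub, hf1, hf2]
    have h := tv_doeblin_step P hpos hmass t₀ ht₀ α hα hα1 ν hν hν1 hDoeblin (μ₁ - μ₂) hσ0
    rw [hPσ] at h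
    have htv0 : tv (μ₁ - μ₂) = 0 := by nlinarith [tv_nonneg (μ₁ - μ₂)]
    exact sub_eq_zero.mp (eq_zero_of_tv_zero htv0)
  have hinv : ∀ t, 0 ≤ t → P t μstar = μstar := by
    intro t ht
    have hcomm : P t₀ (P t μstar) = P t μstar := by
      have h1 : P (t₀ + t) μstar = P t₀ (P t μstar) := by
        rw [hsemi t₀ t ht₀.le ht]; rfl
      have h2 : P (t + t₀) μstar = P t (P t₀ μstar) := by
        rw [hsemi t t₀ ht ht₀.le]; rfl
      rw [← h1, show t₀ + t = t + t₀ from by ring, h2, hstar_fix]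
    exact fix_unique (P t μstar) μstar (hpos t ht μstar hstar_nn)
      (by rw [hmass t ht, hstar_u]) hstar_nn hstar_u hcomm hstar_fix
  refine ⟨μstar, hstar_nn, hstar_u, hinv, ?_, ?_⟩
  · intro μ' h1 h2 h3
    exact fix_unique μ' μstar h1 h2 hstar_nn hstar_u (h3 t₀ ht₀.le) hstar_fix
  · intro μ hμnn hμu t ht
    have hσ0 : (μ - μstar) Set.univ = 0 := by
      rw [VectorMeasure.sub_apply, hμu, hstar_u]; ring
    have hPσ : P t μ - μstar = P t (μ - μstar) := by
      rw [map_sub, hinv t ht]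
    set k : ℕ := ⌊t / t₀⌋₊ with hk
    have hk1 : (k : ℝ) ≤ t / t₀ := Nat.floor_le (by positivity)
    have hk2 : t / t₀ - 1 < (k : ℝ) := Nat.sub_one_lt_floor (t / t₀)
    have hkt : (k : ℝ) * t₀ ≤ t := by
      calc (k : ℝ) * t₀ ≤ (t / t₀) * t₀ := by nlinarith
        _ = t := by field_simp
    set r : ℝ := t - k * t₀ with hr
    have hr0 : 0 ≤ r := by rw [hr]; linarith
    have hsplit : P t (μ - μstar) = P ((k : ℝ) * t₀) (P r (μ - μstar)) := by
      have h5 : t = (k : ℝ) * t₀ + r := by rw [hr]; ring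
      rw [h5, hsemi _ r (by positivity) hr0]; rfl
    have hbound1 : tv (P r (μ - μstar)) ≤ tv (μ - μstar) :=
      tv_nonexpansive P hpos hmass r hr0 (μ - μstar)
    have hmr : (P r (μ - μstar)) Set.univ = 0 := by rw [hmass r hr0, hσ0]
    have hbound2 : tv (P ((k : ℝ) * t₀) (P r (μ - μstar))) ≤ (1 - α) ^ k * tv (P r (μ - μstar)) :=
      tv_iterate P hid hsemi hpos hmass t₀ ht₀ α hα hα1 ν hν hν1 hDoeblin _ hmr k
    have hbound : tv (P t μ - μstar) ≤ (1 - α) ^ k * tv (μ - μstar) := by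
      rw [hPσ, hsplit]
      calc tv (P ((k : ℝ) * t₀) (P r (μ - μstar))) ≤ (1 - α) ^ k * tv (P r (μ - μstar)) :=
            hbound2
        _ ≤ (1 - α) ^ k * tv (μ - μstar) :=
            mul_le_mul_of_nonneg_left hbound1 (pow_nonneg h1α.le k)
    set C : ℝ := (1 / (1 - α)) * Real.exp (-(-Real.log (1 - α) / t₀) * t) with hC
    have hC0 : 0 ≤ C := le_of_lt (mul_pos (one_div_pos.mpr h1α) (Real.exp_pos _))
    have hCval : C = (1 - α) ^ ((t / t₀) - 1 : ℝ) := by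
      rw [Real.rpow_sub h1α, Real.rpow_one, Real.rpow_def_of_pos h1α, hC,
        show (-(-Real.log (1 - α) / t₀) * t) = Real.log (1 - α) * (t / t₀) from by
          field_simp]
      ring
    have hpow : (1 - α) ^ k ≤ C := by
      rw [hCval, ← Real.rpow_natCast (1 - α) k]
      exact Real.rpow_le_rpow_of_exponent_ge h1α (by linarith) (by linarith)
    rw [totalVariation_eq_ofReal, totalVariation_eq_ofReal, ← ENNReal.ofReal_mul hC0]
    apply ENNReal.ofReal_le_ofReal
    calc tv (P t μ - μstar) ≤ (1 - α) ^ k * tv (μ - μstar) := hbound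
      _ ≤ C * tv (μ - μstar) := mul_le_mul_of_nonneg_right hpow (tv_nonneg (μ - μstar))
end
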